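/- arXiv:1611.07102 — 3 statements merged into one kernel-verified Lean document; each statement's English description precedes it below -/
import Mathlib

section
/- Let F be a committee selection rule satisfying SPO and SPP. Suppose F(P) = W, let s = best(P_i, W) and b = worst(P_i, W), and suppose s is not top-ranked in P_i. Let W' = F(P^{i↑s}). Then best(P_i^{↑s}, W') = s and worst(P_i^{↑s}, W') = b. -/
open Function

/-- A ballot is a strict linear order on the set of alternatives. -/
abbrev Ballot (A : Type*) := LinearOrder A

/-- A profile assigns a ballot to each voter. -/
abbrev Profile (V A : Type*) := V → Ballot A

variable {V A : Type*}

/-- The best (greatest) element of `W` under ballot `L` (junk value if `W` is empty). -/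
noncomputable def bestIn [Nonempty A] (L : Ballot A) (W : Finset A) : A :=
  if h : W.Nonempty then @Finset.max' A L W h else Classical.arbitrary A

/-- The worst (least) element of `W` under ballot `L` (junk value if `W` is empty). -/
noncomputable def worstIn [Nonempty A] (L : Ballot A) (W : Finset A) : A :=
  if h : W.Nonempty then @Finset.min' A L W h else Classical.arbitrary A

/-- Strategy-proofness for optimists. -/
def SPO [DecidableEq V] [Nonempty A] (F : Profile V A → Finset A) : Prop :=
  ∀ (P : Profile V A) (i : V) (Pi' : Ballot A),
    (P i).le (bestIn (P i) (F (Function.update P i Pi'))) (bestIn (P i) (F P))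

/-- Strategy-proofness for pessimists. -/
def SPP [DecidableEq V] [Nonempty A] (F : Profile V A → Finset A) : Prop :=
  ∀ (P : Profile V A) (i : V) (Pi' : Ballot A),
    (P i).le (worstIn (P i) (F (Function.update P i Pi'))) (worstIn (P i) (F P))

/-- `F` is weakly viable if every alternative is on some winning committee. -/
def WeaklyViable (F : Profile V A → Finset A) : Prop :=
  ∀ a : A, ∃ P : Profile V A, a ∈ F P

/-- `F` is Marian if some alternative is on every winning committee. -/
def Marian (F : Profile V A → Finset A) : Prop :=
  ∃ m : A, ∀ P : Profile V A, m ∈ F P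

/-- restriction of a ballot to a subset of alternatives -/
def restrictBallot (L : Ballot A) (B : Finset A) : Ballot {x // x ∈ B} :=
  @LinearOrder.lift' _ A L (fun x => (x : A)) Subtype.val_injective

/-- A consular rule is reducible if it is the disjoint union of two social choice functions. -/
def Reducible [Fintype A] [DecidableEq A] (F : Profile V A → Finset A) : Prop :=
  ∃ B C : Finset A, B.Nonempty ∧ C.Nonempty ∧ Disjoint B C ∧ B ∪ C = Finset.univ ∧
    ∃ (G : Profile V {x // x ∈ B} → {x // x ∈ B}) (H : Profile V {x // x ∈ C} → {x // x ∈ C}),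
      ∀ P : Profile V A,
        F P = {((G (fun i => restrictBallot (P i) B)) : A), ((H (fun i => restrictBallot (P i) C)) : A)}

/-- The range graph of a consular election rule. -/
def rangeGraph [DecidableEq A] (F : Profile V A → Finset A) : SimpleGraph A where
  Adj a b := a ≠ b ∧ ∃ P : Profile V A, F P = {a, b}
  symm := by
    constructor
    rintro a b ⟨hab, P, hP⟩
    exact ⟨hab.symm, P, by rwa [Finset.pair_comm]⟩
  loopless := by constructor; rintro a ⟨h, -⟩; exact h rfl

/-- `t` is ranked immediately above `s` in ballot `L`. -/
def JustAbove (L : Ballot A) (s t : A) : Prop :=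
  L.lt s t ∧ ∀ z, ¬ (L.lt s z ∧ L.lt z t)

/-- The ballot obtained from `L` by transposing the alternatives `s` and `t`. -/
def swapBallot [DecidableEq A] (L : Ballot A) (s t : A) : Ballot A :=
  @LinearOrder.lift' A A L (Equiv.swap s t) (Equiv.injective _)

/-- `L'` is obtained from `L` by moving `s` up. -/
def MovedUp (L L' : Ballot A) (s : A) : Prop :=
  (∀ x y, x ≠ s → y ≠ s → (L'.lt x y ↔ L.lt x y)) ∧ ∀ x, L.lt x s → L'.lt x s

/-- `L'` is obtained from `L` by moving `s` down. -/
def MovedDown (L L' : Ballot A) (s : A) : Prop :=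
  (∀ x y, x ≠ s → y ≠ s → (L'.lt x y ↔ L.lt x y)) ∧ ∀ x, L.lt s x → L'.lt s x

/-- Strategy-proofness of a single-winner social choice function. -/
def SCFStrategyProof {B : Type*} [DecidableEq V] (G : Profile V B → B) : Prop :=
  ∀ (Q : Profile V B) (i : V) (Qi' : Ballot B),
    (Q i).le (G (Function.update Q i Qi')) (G Q)

/-- Edge-connectivity of a graph. -/
def EdgeConnectivity {X : Type*} (G : SimpleGraph X) : Prop :=
  ∀ a b c d : X, G.Adj a b → G.Adj c d → a ≠ c → a ≠ d → b ≠ c → b ≠ d →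
    (G.Adj a c ∨ G.Adj a d) ∧ (G.Adj b c ∨ G.Adj b d)



section Helpers

variable {A : Type*}

lemma bestIn_mem [Nonempty A] (L : Ballot A) {W : Finset A} (h : W.Nonempty) :
    bestIn L W ∈ W := by
  rw [bestIn, dif_pos h]; exact @Finset.max'_mem A L W h

lemma le_bestIn [Nonempty A] (L : Ballot A) {W : Finset A} (h : W.Nonempty) {x : A}
    (hx : x ∈ W) : L.le x (bestIn L W) := by
  rw [bestIn, dif_pos h]; exact @Finset.le_max' A L W x hx

lemma worstIn_mem [Nonempty A] (L : Ballot A) {W : Finset A} (h : W.Nonempty) :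
    worstIn L W ∈ W := by
  rw [worstIn, dif_pos h]; exact @Finset.min'_mem A L W h

lemma worstIn_le [Nonempty A] (L : Ballot A) {W : Finset A} (h : W.Nonempty) {x : A}
    (hx : x ∈ W) : L.le (worstIn L W) x := by
  rw [worstIn, dif_pos h]; exact @Finset.min'_le A L W x hx

lemma blt_trans (L : Ballot A) {x y z : A} (h1 : L.lt x y) (h2 : L.lt y z) : L.lt x z := by
  letI := L; exact lt_trans h1 h2

lemma ble_trans (L : Ballot A) {x y z : A} (h1 : L.le x y) (h2 : L.le y z) : L.le x z := by
  letI := L; exact le_trans h1 h2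

lemma ble_antisymm (L : Ballot A) {x y : A} (h1 : L.le x y) (h2 : L.le y x) : x = y := by
  letI := L; exact le_antisymm h1 h2

lemma blt_of_le_ne (L : Ballot A) {x y : A} (h1 : L.le x y) (h2 : x ≠ y) : L.lt x y := by
  letI := L; exact lt_of_le_of_ne h1 h2

lemma ble_of_lt (L : Ballot A) {x y : A} (h : L.lt x y) : L.le x y := by
  letI := L; exact le_of_lt h

lemma blt_asymm (L : Ballot A) {x y : A} (h1 : L.lt x y) (h2 : L.lt y x) : False := by
  letI := L; exact absurd h2 (not_lt_of_gt h1)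

lemma blt_not_le (L : Ballot A) {x y : A} (h1 : L.lt x y) (h2 : L.le y x) : False := by
  letI := L; exact absurd h2 (not_le_of_gt h1)

lemma bne_of_lt (L : Ballot A) {x y : A} (h : L.lt x y) : x ≠ y := by
  letI := L; exact ne_of_lt h

lemma bestIn_eq [Nonempty A] (L : Ballot A) {W : Finset A} {s : A} (hs : s ∈ W)
    (hmax : ∀ x ∈ W, L.le x s) : bestIn L W = s :=
  ble_antisymm L (hmax _ (bestIn_mem L ⟨s, hs⟩)) (le_bestIn L ⟨s, hs⟩ hs)

lemma worstIn_eq [Nonempty A] (L : Ballot A) {W : Finset A} {b : A} (hb : b ∈ W)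
    (hmin : ∀ x ∈ W, L.le b x) : worstIn L W = b :=
  ble_antisymm L (worstIn_le L ⟨b, hb⟩ hb) (hmin _ (worstIn_mem L ⟨b, hb⟩))

end Helpers

/-- swapping the best committee member `s` one position up in voter `i`'s
ballot preserves the best and worst committee members. -/
theorem statement_1 {V A : Type*} [Fintype V] [Nonempty V] [DecidableEq V] [Fintype A] [DecidableEq A] [Nonempty A]
    (k : ℕ) (hk : 1 ≤ k)
    (F : Profile V A → Finset A) (hcomm : ∀ P, (F P).card = k)
    (hSPO : SPO F) (hSPP : SPP F)
    (P : Profile V A) (i : V) (W : Finset A) (hW : F P = W)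
    (s b u : A)
    (hs : bestIn (P i) W = s) (hb : worstIn (P i) W = b)
    (hu : JustAbove (P i) s u)
    (W' : Finset A)
    (hW' : F (Function.update P i (swapBallot (P i) s u)) = W') :
    bestIn (swapBallot (P i) s u) W' = s ∧
    worstIn (swapBallot (P i) s u) W' = b := by
  classical
  set L' := swapBallot (P i) s u with hL'def
  have hsu : (P i).lt s u := hu.1
  have hnus : ¬ (P i).le u s := (((P i).lt_iff_le_not_ge s u).mp hsu).2
  have hWne : W.Nonempty := Finset.card_pos.mp (by rw [← hW, hcomm P]; exact hk)
  have hW'ne : W'.Nonempty := Finset.card_pos.mp (by rw [← hW', hcomm _]; exact hk)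
  have hsW : s ∈ W := hs ▸ bestIn_mem (P i) hWne
  have hbW : b ∈ W := hb ▸ worstIn_mem (P i) hWne
  have hles : ∀ x ∈ W, (P i).le x s := fun x hx => hs ▸ le_bestIn (P i) hWne hx
  have hgeb : ∀ x ∈ W, (P i).le b x := fun x hx => hb ▸ worstIn_le (P i) hWne hx
  have huW : u ∉ W := fun h => hnus (hles u h)
  have hlt' : ∀ x y, L'.lt x y ↔ (P i).lt (Equiv.swap s u x) (Equiv.swap s u y) :=
    fun _ _ => Iff.rfl
  -- Step A : bestIn L' W = s
  have hbestA : bestIn L' W = s := by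
    apply bestIn_eq L' hsW
    intro x hx
    rcases eq_or_ne x s with rfl | hxs
    · exact L'.le_refl x
    · have hxu : x ≠ u := fun h => huW (h ▸ hx)
      apply ble_of_lt
      rw [hlt' x s, Equiv.swap_apply_left, Equiv.swap_apply_of_ne_of_ne hxs hxu]
      exact blt_trans _ (blt_of_le_ne _ (hles x hx) hxs) hsu
  -- Step B : worstIn L' W = b
  have hworstB : worstIn L' W = b := by
    apply worstIn_eq L' hbW
    intro x hx
    rcases eq_or_ne x b with rfl | hxb
    · exact L'.le_refl x
    have hbs : b ≠ s := by
      rintro rfl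
      exact hxb (ble_antisymm _ (hles x hx) (hgeb x hx))
    have hbu : b ≠ u := fun h => huW (h ▸ hbW)
    have hxu : x ≠ u := fun h => huW (h ▸ hx)
    have hbx : (P i).lt b x := blt_of_le_ne _ (hgeb x hx) (Ne.symm hxb)
    apply ble_of_lt
    rcases eq_or_ne x s with rfl | hxs
    · rw [hlt' b x, Equiv.swap_apply_left, Equiv.swap_apply_of_ne_of_ne hbs hbu]
      exact blt_trans _ hbx hsu
    · rw [hlt' b x, Equiv.swap_apply_of_ne_of_ne hbs hbu,
        Equiv.swap_apply_of_ne_of_ne hxs hxu]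
      exact hbx
  -- strategy-proofness instances
  have h1 : (P i).le (bestIn (P i) W') s := by
    have h := hSPO P i L'
    rw [hW', hW, hs] at h
    exact h
  have h2 : (P i).le (worstIn (P i) W') b := by
    have h := hSPP P i L'
    rw [hW', hW, hb] at h
    exact h
  have hQ : Function.update (Function.update P i L') i (P i) = P := by
    rw [Function.update_idem, Function.update_eq_self]
  have h3 : L'.le s (bestIn L' W') := by
    have h := hSPO (Function.update P i L') i (P i)
    rw [Function.update_self, hQ, hW, hW', hbestA] at h
    exact h
  have h4 : L'.le b (worstIn L' W') := by
    have h := hSPP (Function.update P i L') i (P i)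
    rw [Function.update_self, hQ, hW, hW', hworstB] at h
    exact h
  -- Step C : bestIn L' W' = s
  have hs'W' : bestIn L' W' ∈ W' := bestIn_mem L' hW'ne
  have hC : bestIn L' W' = s := by
    by_contra hne
    have hlt : L'.lt s (bestIn L' W') := blt_of_le_ne _ h3 (Ne.symm hne)
    have hs'u : bestIn L' W' ≠ u := by
      intro h
      rw [hlt' s (bestIn L' W'), h, Equiv.swap_apply_left, Equiv.swap_apply_right] at hlt
      exact blt_asymm _ hsu hlt
    rw [hlt' s (bestIn L' W'), Equiv.swap_apply_left,
      Equiv.swap_apply_of_ne_of_ne hne hs'u] at hlt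
    have hle1 : (P i).le (bestIn L' W') s := ble_trans _ (le_bestIn (P i) hW'ne hs'W') h1
    exact blt_not_le _ (blt_trans _ hsu hlt) hle1
  -- Step D : worstIn L' W' = b
  have hb'W' : worstIn L' W' ∈ W' := worstIn_mem L' hW'ne
  have hD : worstIn L' W' = b := by
    rcases eq_or_ne b s with rfl | hbs
    · exact ble_antisymm _ (hC ▸ worstIn_le L' hW'ne (hC ▸ bestIn_mem L' hW'ne)) h4
    have hbu : b ≠ u := fun h => huW (h ▸ hbW)
    have hbs_lt : (P i).lt b s := blt_of_le_ne _ (hles b hbW) hbs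
    have hw''W' : worstIn (P i) W' ∈ W' := worstIn_mem (P i) hW'ne
    have hw''s : (P i).lt (worstIn (P i) W') s := by
      rcases eq_or_ne (worstIn (P i) W') b with h | h
      · rw [h]; exact hbs_lt
      · exact blt_trans _ (blt_of_le_ne _ h2 h) hbs_lt
    have hw''ltu : (P i).lt (worstIn (P i) W') u := blt_trans _ hw''s hsu
    have hw''ns : worstIn (P i) W' ≠ s := bne_of_lt _ hw''s
    have hw''nu : worstIn (P i) W' ≠ u := bne_of_lt _ hw''ltu
    have hb'le : L'.le (worstIn L' W') (worstIn (P i) W') := worstIn_le L' hW'ne hw''W'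
    by_contra hb'b
    have hltbb' : L'.lt b (worstIn L' W') := blt_of_le_ne _ h4 (Ne.symm hb'b)
    rcases eq_or_ne (worstIn L' W') s with hb's | hb's
    · rw [hb's] at hb'le
      have hx : L'.lt s (worstIn (P i) W') := blt_of_le_ne _ hb'le (Ne.symm hw''ns)
      rw [hlt' s (worstIn (P i) W'), Equiv.swap_apply_left,
        Equiv.swap_apply_of_ne_of_ne hw''ns hw''nu] at hx
      exact blt_asymm _ hx hw''ltu
    rcases eq_or_ne (worstIn L' W') u with hb'u | hb'u
    · rw [hb'u] at hb'le
      have hx : L'.lt u (worstIn (P i) W') := blt_of_le_ne _ hb'le (Ne.symm hw''nu)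
      rw [hlt' u (worstIn (P i) W'), Equiv.swap_apply_right,
        Equiv.swap_apply_of_ne_of_ne hw''ns hw''nu] at hx
      exact blt_asymm _ hx hw''s
    · rw [hlt' b (worstIn L' W'), Equiv.swap_apply_of_ne_of_ne hbs hbu,
        Equiv.swap_apply_of_ne_of_ne hb's hb'u] at hltbb'
      rcases eq_or_ne (worstIn L' W') (worstIn (P i) W') with heq | hbw
      · rw [heq] at hltbb'
        exact blt_not_le _ hltbb' h2
      · have hx : L'.lt (worstIn L' W') (worstIn (P i) W') := blt_of_le_ne _ hb'le hbw
        rw [hlt' (worstIn L' W') (worstIn (P i) W'), Equiv.swap_apply_of_ne_of_ne hb's hb'u,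
          Equiv.swap_apply_of_ne_of_ne hw''ns hw''nu] at hx
        exact blt_not_le _ (blt_trans _ hltbb' hx) h2
  exact ⟨hC, hD⟩
end

section
/- There exist a finite set A with |A| ≥ 3, a nonempty finite set V of voters, and a Marian consular election rule over (V, A) satisfying SPO, SPP and weak viability that has no weak dictator (no voter i such that voter i's top-ranked alternative lies in F(P) for every profile P). -/
open Function

variable {V A : Type*}

section Aux

lemma ballot_le_refl {A : Type*} (L : Ballot A) (a : A) : L.le a a :=
  @le_refl _ (@PartialOrder.toPreorder _ (@LinearOrder.toPartialOrder _ L)) a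

lemma ballot_le_of_lt {A : Type*} (L : Ballot A) {a b : A} (h : L.lt a b) : L.le a b :=
  @le_of_lt _ (@PartialOrder.toPreorder _ (@LinearOrder.toPartialOrder _ L)) _ _ h

lemma ballot_le_of_not_lt {A : Type*} (L : Ballot A) {a b : A} (h : ¬ L.lt a b) : L.le b a :=
  (@not_lt _ L _ _).mp h

lemma bestIn_pair' {A : Type*} [Nonempty A] [DecidableEq A] (L : Ballot A) (a b : A) :
    bestIn L ({a, b} : Finset A) = if L.lt a b then b else a := by
  letI := L
  have hne : ({a,b} : Finset A).Nonempty := ⟨a, by simp⟩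
  rw [bestIn, dif_pos hne]
  have hmem := Finset.max'_mem ({a,b} : Finset A) hne
  have ha := Finset.le_max' ({a,b} : Finset A) a (by simp)
  have hb := Finset.le_max' ({a,b} : Finset A) b (by simp)
  simp only [Finset.mem_insert, Finset.mem_singleton] at hmem
  split_ifs with h
  · rcases hmem with h1 | h1
    · rw [h1] at hb; exact absurd h (not_lt.mpr hb)
    · exact h1
  · rcases hmem with h1 | h1
    · exact h1
    · rw [h1] at ha; exact (le_antisymm ha (not_lt.mp h)).symm ▸ h1

lemma worstIn_pair' {A : Type*} [Nonempty A] [DecidableEq A] (L : Ballot A) (a b : A) :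
    worstIn L ({a, b} : Finset A) = if L.lt a b then a else b := by
  letI := L
  have hne : ({a,b} : Finset A).Nonempty := ⟨a, by simp⟩
  rw [worstIn, dif_pos hne]
  have hmem := Finset.min'_mem ({a,b} : Finset A) hne
  have ha := Finset.min'_le ({a,b} : Finset A) a (by simp)
  have hb := Finset.min'_le ({a,b} : Finset A) b (by simp)
  simp only [Finset.mem_insert, Finset.mem_singleton] at hmem
  split_ifs with h
  · rcases hmem with h1 | h1
    · exact h1
    · rw [h1] at ha; exact absurd h (not_lt.mpr ha)
  · rcases hmem with h1 | h1
    · rw [h1] at hb; exact (le_antisymm hb (not_lt.mp h)) ▸ h1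
    · exact h1

lemma pair_mono' {A : Type*} [Nonempty A] [DecidableEq A] (L : Ballot A) (m x y : A)
    (h : L.le x y) :
    L.le (bestIn L {m, x}) (bestIn L {m, y}) ∧ L.le (worstIn L {m, x}) (worstIn L {m, y}) := by
  letI := L
  rw [bestIn_pair', bestIn_pair', worstIn_pair', worstIn_pair']
  constructor
  · split_ifs with h1 h2 h3
    · exact h
    · exact le_trans h (not_lt.mp h2)
    · exact le_of_lt h3
    · exact le_refl _
  · split_ifs with h1 h2 h3
    · exact le_refl _
    · exact absurd (lt_of_lt_of_le h1 (le_trans h (not_lt.mp h2))) (lt_irrefl m)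
    · exact not_lt.mp h1
    · exact h

open scoped Classical in
noncomputable def Frule (P : Profile (Fin 2) (Fin 3)) : Finset (Fin 3) :=
  if ((P 0).lt 1 2 ∧ (P 1).lt 1 2) then {0, 2} else {0, 1}

abbrev stdB : Ballot (Fin 3) := inferInstance
noncomputable abbrev sbB : Ballot (Fin 3) := swapBallot stdB 1 2

lemma stdB_lt12 : stdB.lt 1 2 := by decide

lemma sbB_not_lt12 : ¬ sbB.lt 1 2 := by
  show ¬ ((Equiv.swap (1 : Fin 3) 2) 1 < (Equiv.swap (1 : Fin 3) 2) 2)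
  decide

lemma Frule_pos {P : Profile (Fin 2) (Fin 3)} (h : (P 0).lt 1 2 ∧ (P 1).lt 1 2) :
    Frule P = {0, 2} := if_pos h
lemma Frule_neg {P : Profile (Fin 2) (Fin 3)} (h : ¬ ((P 0).lt 1 2 ∧ (P 1).lt 1 2)) :
    Frule P = {0, 1} := if_neg h

lemma fin2_cases (i : Fin 2) : i = 0 ∨ i = 1 := by omega

lemma Frule_le21 {P : Profile (Fin 2) (Fin 3)} (i : Fin 2) (Pi' : Ballot (Fin 3))
    (h1 : ¬ ((P 0).lt 1 2 ∧ (P 1).lt 1 2))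
    (h2 : ((Function.update P i Pi') 0).lt 1 2 ∧ ((Function.update P i Pi') 1).lt 1 2) :
    (P i).le 2 1 := by
  have hupd : ∀ j, j ≠ i → Function.update P i Pi' j = P j :=
    fun j hj => Function.update_of_ne hj _ _
  apply ballot_le_of_not_lt
  rcases fin2_cases i with rfl | rfl
  · intro hlt; exact h1 ⟨hlt, (hupd 1 (by decide)) ▸ h2.2⟩
  · intro hlt; exact h1 ⟨(hupd 0 (by decide)) ▸ h2.1, hlt⟩

lemma Frule_le12 {P : Profile (Fin 2) (Fin 3)} (i : Fin 2)
    (h : (P 0).lt 1 2 ∧ (P 1).lt 1 2) : (P i).le 1 2 := by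
  apply ballot_le_of_lt
  rcases fin2_cases i with rfl | rfl
  · exact h.1
  · exact h.2

end Aux

/-- there exists a Marian consular election rule with at least three
alternatives (here `m + 3` alternatives and `n + 1` voters) satisfying SPO, SPP and
weak viability that has no weak dictator. -/
theorem statement_8 :
    ∃ (m n : ℕ), ∃ F : Profile (Fin (n + 1)) (Fin (m + 3)) → Finset (Fin (m + 3)),
      (∀ P, (F P).card = 2) ∧ SPO F ∧ SPP F ∧ Marian F ∧ WeaklyViable F ∧
      ¬ ∃ i : Fin (n + 1), ∀ (P : Profile (Fin (n + 1)) (Fin (m + 3))) (a : Fin (m + 3)),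
          (∀ x : Fin (m + 3), (P i).le x a) → a ∈ F P := by
  refine ⟨0, 1, Frule, ?_, ?_, ?_, ⟨0, ?_⟩, ?_, ?_⟩
  · intro P
    unfold Frule; split_ifs <;> decide
  · -- SPO
    intro P i Pi'
    by_cases h1 : ((P 0).lt 1 2 ∧ (P 1).lt 1 2) <;>
      by_cases h2 : (((Function.update P i Pi') 0).lt 1 2 ∧
        ((Function.update P i Pi') 1).lt 1 2)
    · rw [Frule_pos h1, Frule_pos h2]; exact ballot_le_refl _ _
    · rw [Frule_pos h1, Frule_neg h2]
      exact (pair_mono' (P i) 0 1 2 (Frule_le12 i h1)).1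
    · rw [Frule_neg h1, Frule_pos h2]
      exact (pair_mono' (P i) 0 2 1 (Frule_le21 i Pi' h1 h2)).1
    · rw [Frule_neg h1, Frule_neg h2]; exact ballot_le_refl _ _
  · -- SPP
    intro P i Pi'
    by_cases h1 : ((P 0).lt 1 2 ∧ (P 1).lt 1 2) <;>
      by_cases h2 : (((Function.update P i Pi') 0).lt 1 2 ∧
        ((Function.update P i Pi') 1).lt 1 2)
    · rw [Frule_pos h1, Frule_pos h2]; exact ballot_le_refl _ _
    · rw [Frule_pos h1, Frule_neg h2]
      exact (pair_mono' (P i) 0 1 2 (Frule_le12 i h1)).2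
    · rw [Frule_neg h1, Frule_pos h2]
      exact (pair_mono' (P i) 0 2 1 (Frule_le21 i Pi' h1 h2)).2
    · rw [Frule_neg h1, Frule_neg h2]; exact ballot_le_refl _ _
  · -- Marian with m = 0
    intro P
    unfold Frule; split_ifs <;> decide
  · -- WeaklyViable
    intro a
    fin_cases a
    · refine ⟨fun _ => stdB, ?_⟩
      rw [Frule_pos ⟨stdB_lt12, stdB_lt12⟩]; decide
    · refine ⟨fun _ => sbB, ?_⟩
      have hF : Frule (fun _ : Fin 2 => sbB) = {0, 1} :=
        Frule_neg (fun hc => sbB_not_lt12 hc.1)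
      rw [hF]; decide
    · refine ⟨fun _ => stdB, ?_⟩
      rw [Frule_pos ⟨stdB_lt12, stdB_lt12⟩]; decide
  · -- no weak dictator
    rintro ⟨i, h⟩
    set P : Profile (Fin 2) (Fin 3) := fun j => if j = i then stdB else sbB with hP
    have hPi : P i = stdB := by simp [hP]
    have htop : ∀ x : Fin 3, (P i).le x 2 := by
      intro x; rw [hPi]; fin_cases x <;> decide
    have hmem := h P 2 htop
    have hF : Frule P = {0, 1} := by
      apply Frule_neg
      rcases fin2_cases i with rfl | rfl
      · rintro ⟨-, hc⟩
        rw [show P 1 = sbB by simp [hP]] at hc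
        exact sbB_not_lt12 hc
      · rintro ⟨hc, -⟩
        rw [show P 0 = sbB by simp [hP]] at hc
        exact sbB_not_lt12 hc
    rw [hF] at hmem
    exact absurd hmem (by decide)
end

section
/- Let F be a weakly viable, reducible consular election rule satisfying SPP and SPO. Then F is Marian if and only if the range graph 𝒢(F) is acyclic (contains no cycle). -/
open Function

variable {V A : Type*}

section Aux

open SimpleGraph

private lemma walk_to_center' {X : Type*} {G : SimpleGraph X} {m : X}
    (h : ∀ x y, G.Adj x y → x = m ∨ y = m) :
    ∀ {x : X}, x ≠ m → ∀ (p : G.Walk x m), s(x, m) ∈ p.edges := by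
  intro x hxm p
  cases p with
  | nil => exact absurd rfl hxm
  | @cons _ y _ h1 q =>
    have hy : y = m := (h _ _ h1).resolve_left hxm
    subst hy
    simp [Walk.edges_cons]

private lemma star_acyclic' {X : Type*} {G : SimpleGraph X} (m : X)
    (h : ∀ x y, G.Adj x y → x = m ∨ y = m) : G.IsAcyclic := by
  rw [isAcyclic_iff_forall_adj_isBridge]
  intro v w hadj
  rw [isBridge_iff]
  show ¬ _
  rw [reachable_delete_edges_iff_exists_walk]
  rintro ⟨p, hp⟩
  rcases h v w hadj with h' | h'
  · subst h'
    have hwm : w ≠ v := fun hw => G.loopless.irrefl v (hw ▸ hadj)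
    have := walk_to_center' h hwm p.reverse
    rw [Walk.edges_reverse, List.mem_reverse] at this
    rw [Sym2.eq_swap] at hp
    exact hp this
  · subst h'
    exact hp (walk_to_center' h hadj.ne p)

private lemma four_cycle' {X : Type*} {G : SimpleGraph X} {b1 b2 c1 c2 : X}
    (hb : b1 ≠ b2) (hc : c1 ≠ c2)
    (h11 : G.Adj b1 c1) (h12 : G.Adj b1 c2) (h21 : G.Adj b2 c1) (h22 : G.Adj b2 c2) :
    ¬ G.IsAcyclic := by
  intro hac
  have n11 := h11.ne
  have n12 := h12.ne
  have n21 := h21.ne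
  have n22 := h22.ne
  refine hac (Walk.cons h11 (Walk.cons h21.symm (Walk.cons h22 (Walk.cons h12.symm Walk.nil)))) ?_
  constructor
  · constructor
    · rw [Walk.isTrail_def]
      simp only [Walk.edges_cons, Walk.edges_nil, List.nodup_cons, List.mem_cons,
        List.not_mem_nil, or_false, List.nodup_nil, and_true, Sym2.eq, Sym2.rel_iff']
      refine ⟨?_, ?_, ?_⟩ <;> push_neg <;> simp_all [Prod.ext_iff, eq_comm]
    · simp
  · simp only [Walk.support_cons, Walk.support_nil, List.tail_cons, List.nodup_cons,
      List.mem_cons, List.not_mem_nil, or_false, List.nodup_nil, and_true]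
    refine ⟨?_, ?_, ?_⟩ <;> simp_all [eq_comm]

private lemma exists_ballot_ext' {A : Type*} [DecidableEq A] (B C : Finset A)
    (hdisj : Disjoint B C) (hunion : ∀ a, a ∈ B ∨ a ∈ C)
    (q : Ballot {x // x ∈ B}) (r : Ballot {x // x ∈ C}) :
    ∃ L : Ballot A, restrictBallot L B = q ∧ restrictBallot L C = r := by
  letI := q
  letI := r
  set φ : A → ({x // x ∈ B} ⊕ₗ {x // x ∈ C}) := fun a =>
    if h : a ∈ B then toLex (Sum.inl ⟨a, h⟩) else toLex (Sum.inr ⟨a, (hunion a).resolve_left h⟩)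
    with hφ
  have hφB : ∀ (x : {x // x ∈ B}), φ (x : A) = toLex (Sum.inl x) := by
    rintro ⟨x, hx⟩; simp [hφ, hx]
  have hφC : ∀ (x : {x // x ∈ C}), φ (x : A) = toLex (Sum.inr x) := by
    rintro ⟨x, hx⟩
    have hxB : x ∉ B := fun hB => (Finset.disjoint_left.mp hdisj hB) hx
    simp [hφ, hxB]
  have hinj : Function.Injective φ := by
    intro a b hab
    by_cases ha : a ∈ B <;> by_cases hb : b ∈ B <;> simp [hφ, ha, hb] at hab <;> simp_all
  refine ⟨LinearOrder.lift' φ hinj, ?_, ?_⟩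
  · apply LinearOrder.ext
    intro x y
    show φ (x : A) ≤ φ (y : A) ↔ _
    rw [hφB, hφB, Sum.Lex.inl_le_inl_iff]
  · apply LinearOrder.ext
    intro x y
    show φ (x : A) ≤ φ (y : A) ↔ _
    rw [hφC, hφC, Sum.Lex.inr_le_inr_iff]

private lemma exists_profile_ext' {V A : Type*} [DecidableEq A] (B C : Finset A)
    (hdisj : Disjoint B C) (hunion : ∀ a, a ∈ B ∨ a ∈ C)
    (Q : Profile V {x // x ∈ B}) (R : Profile V {x // x ∈ C}) :
    ∃ P : Profile V A, (∀ i, restrictBallot (P i) B = Q i) ∧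
      (∀ i, restrictBallot (P i) C = R i) := by
  choose L hL1 hL2 using fun i => exists_ballot_ext' B C hdisj hunion (Q i) (R i)
  exact ⟨L, hL1, hL2⟩

end Aux

/-- a weakly viable reducible consular election rule satisfying SPP and
SPO is Marian iff its range graph is acyclic. -/
theorem statement_13 {V A : Type*} [Fintype V] [Nonempty V] [DecidableEq V] [Fintype A] [DecidableEq A] [Nonempty A]
    (F : Profile V A → Finset A) (hcomm : ∀ P, (F P).card = 2)
    (hviable : WeaklyViable F) (hred : Reducible F)
    (hSPP : SPP F) (hSPO : SPO F) :
    Marian F ↔ (rangeGraph F).IsAcyclic := by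
  obtain ⟨B, C, hB, hC, hdisj, hunion, G, H, hF⟩ := hred
  have hunion' : ∀ a : A, a ∈ B ∨ a ∈ C := fun a =>
    Finset.mem_union.mp (hunion ▸ Finset.mem_univ a)
  -- an element of B that wins must be the G-value, and similarly for C
  have hmemB : ∀ (P : Profile V A) (a : A), a ∈ F P → a ∈ B →
      a = ((G fun i => restrictBallot (P i) B) : A) := by
    intro P a haF haB
    rw [hF] at haF
    rcases Finset.mem_insert.mp haF with h | h
    · exact h
    · rw [Finset.mem_singleton] at h
      exact absurd (h ▸ (H fun i => restrictBallot (P i) C).2)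
        (Finset.disjoint_left.mp hdisj haB)
  have hmemC : ∀ (P : Profile V A) (a : A), a ∈ F P → a ∈ C →
      a = ((H fun i => restrictBallot (P i) C) : A) := by
    intro P a haF haC
    rw [hF] at haF
    rcases Finset.mem_insert.mp haF with h | h
    · exact absurd (h ▸ (G fun i => restrictBallot (P i) B).2)
        (Finset.disjoint_right.mp hdisj haC)
    · exact Finset.mem_singleton.mp h
  -- the range graph is the complete bipartite graph between B and C
  have hedge : ∀ a b : A, a ∈ B → b ∈ C → (rangeGraph F).Adj a b := by
    intro a b ha hb
    obtain ⟨Pa, hPa⟩ := hviable a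
    obtain ⟨Pb, hPb⟩ := hviable b
    obtain ⟨P, hPB, hPC⟩ := exists_profile_ext' B C hdisj hunion'
      (fun i => restrictBallot (Pa i) B) (fun i => restrictBallot (Pb i) C)
    refine ⟨fun h => Finset.disjoint_left.mp hdisj (h ▸ ha) hb, P, ?_⟩
    have h1 : ((G fun i => restrictBallot (P i) B) : A) = a := by
      rw [funext hPB]; exact (hmemB Pa a hPa ha).symm
    have h2 : ((H fun i => restrictBallot (P i) C) : A) = b := by
      rw [funext hPC]; exact (hmemC Pb b hPb hb).symm
    rw [hF, h1, h2]
  constructor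
  · -- Marian → acyclic
    rintro ⟨m, hm⟩
    refine star_acyclic' m ?_
    rintro x y ⟨hxy, P, hP⟩
    have : m ∈ ({x, y} : Finset A) := hP ▸ hm P
    rcases Finset.mem_insert.mp this with h | h
    · exact Or.inl h.symm
    · exact Or.inr (Finset.mem_singleton.mp h).symm
  · -- acyclic → Marian
    intro hac
    by_cases hB1 : B.card = 1
    · obtain ⟨m, hm⟩ := Finset.card_eq_one.mp hB1
      refine ⟨m, fun P => ?_⟩
      have hmB : m ∈ B := by rw [hm]; exact Finset.mem_singleton_self m
      have hg : ((G fun i => restrictBallot (P i) B) : A) = m :=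
        Finset.card_le_one.mp hB1.le _ (G fun i => restrictBallot (P i) B).2 m hmB
      rw [hF]
      exact Finset.mem_insert.mpr (Or.inl hg.symm)
    by_cases hC1 : C.card = 1
    · obtain ⟨m, hm⟩ := Finset.card_eq_one.mp hC1
      refine ⟨m, fun P => ?_⟩
      have hmC : m ∈ C := by rw [hm]; exact Finset.mem_singleton_self m
      have hg : ((H fun i => restrictBallot (P i) C) : A) = m :=
        Finset.card_le_one.mp hC1.le _ (H fun i => restrictBallot (P i) C).2 m hmC
      rw [hF]
      exact Finset.mem_insert.mpr (Or.inr (Finset.mem_singleton.mpr hg.symm))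
    · exfalso
      have hB2 : 1 < B.card := lt_of_le_of_ne hB.card_pos (Ne.symm hB1)
      have hC2 : 1 < C.card := lt_of_le_of_ne hC.card_pos (Ne.symm hC1)
      obtain ⟨b1, hb1, b2, hb2, hbne⟩ := Finset.one_lt_card.mp hB2
      obtain ⟨c1, hc1, c2, hc2, hcne⟩ := Finset.one_lt_card.mp hC2
      exact four_cycle' hbne hcne (hedge b1 c1 hb1 hc1) (hedge b1 c2 hb1 hc2)
        (hedge b2 c1 hb2 hc1) (hedge b2 c2 hb2 hc2) hac
end
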